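/- For every school-choice instance and every student s, the joint-seat-allocation assignment equals the projection of the student-optimal stable matching of the JSA auxiliary instance: μ^JSA(s) = ω(μ^JSA-a(s)). -/

import Mathlib

/-!
Common formalization of school-choice instances with reserved seats
(minority reserve, joint seat allocation, discovery program).

Conventions:
* `prio c s` is the priority rank of student `s` at school `c`
  (smaller value = higher priority); injectivity encodes a strict priority order.
* `pref s o` is the preference rank of outcome `o : Option C` for student `s`
  (smaller value = more preferred); `none` denotes being unmatched, and a school
  `c` is acceptable to `s` iff `pref s (some c) < pref s none`.
-/

open Finset

structure SchoolChoice (S C : Type*) [Fintype S] [DecidableEq S] [Fintype C] [DecidableEq C] where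
  /-- the set of disadvantaged (minority) students; the rest are advantaged -/
  dis : Finset S
  /-- preference rank of each outcome (school or `none` = unmatched) for each student -/
  pref : S → Option C → ℕ
  pref_inj : ∀ s, Function.Injective (pref s)
  /-- priority rank of each student at each school (lower = higher priority) -/
  prio : C → S → ℕ
  prio_inj : ∀ c, Function.Injective (prio c)
  /-- quota of each school -/
  q : C → ℕ
  /-- reservation quota of each school -/
  qR : C → ℕ
  qR_le : ∀ c, qR c ≤ q c

namespace SchoolChoice

variable {S C : Type*} [Fintype S] [DecidableEq S] [Fintype C] [DecidableEq C]

/-- `max(T, >_c, k)`: the `min(k, |T|)` highest-priority students of `T` at school `c`. -/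
def maxSet (I : SchoolChoice S C) (c : C) (T : Finset S) (k : ℕ) : Finset S :=
  T.filter fun s => (T.filter fun t => I.prio c t < I.prio c s).card < k

/-- baseline choice function `C^BASE_c` -/
def CBASE (I : SchoolChoice S C) (c : C) (T : Finset S) : Finset S :=
  I.maxSet c T (I.q c)

/-- `S1^R` of the minority-reserve choice function -/
def mrRes (I : SchoolChoice S C) (c : C) (T : Finset S) : Finset S :=
  I.maxSet c (T ∩ I.dis) (I.qR c)

/-- minority-reserve choice function `C^MR_c` -/
def CMR (I : SchoolChoice S C) (c : C) (T : Finset S) : Finset S :=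
  I.mrRes c T ∪ I.maxSet c (T \ I.mrRes c T) (I.q c - (I.mrRes c T).card)

/-- `S1^G` of the joint-seat-allocation choice function -/
def jsaGen (I : SchoolChoice S C) (c : C) (T : Finset S) : Finset S :=
  I.maxSet c T (I.q c - I.qR c)

/-- `S1^R` of the joint-seat-allocation choice function -/
def jsaRes (I : SchoolChoice S C) (c : C) (T : Finset S) : Finset S :=
  I.maxSet c ((T ∩ I.dis) \ I.jsaGen c T) (I.qR c)

/-- joint-seat-allocation choice function `C^JSA_c` -/
def CJSA (I : SchoolChoice S C) (c : C) (T : Finset S) : Finset S :=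
  I.jsaGen c T ∪ I.jsaRes c T ∪
    I.maxSet c (T \ (I.jsaGen c T ∪ I.jsaRes c T))
      (I.q c - (I.jsaGen c T ∪ I.jsaRes c T).card)

/-- school `c` is acceptable to student `s` -/
def acceptable (I : SchoolChoice S C) (s : S) (c : C) : Prop :=
  I.pref s (some c) < I.pref s none

/-- `μ(c)`: the set of students assigned to school `c` by `μ` -/
def assigned (I : SchoolChoice S C) (μ : S → Option C) (c : C) : Finset S :=
  Finset.univ.filter fun s => μ s = some c

/-- `μ` is a matching: students are assigned only acceptable schools, quotas respected -/
def IsMatching (I : SchoolChoice S C) (μ : S → Option C) : Prop :=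
  (∀ s c, μ s = some c → I.acceptable s c) ∧ ∀ c, (I.assigned μ c).card ≤ I.q c

/-- `μ` is stable w.r.t. the choice functions `Ch`: it is a matching and no pair
`(s, c)` with `c` acceptable to `s` satisfies `c >_s μ(s)` and `s ∈ Ch c (μ(c) ∪ {s})`. -/
def IsStable (I : SchoolChoice S C) (Ch : C → Finset S → Finset S) (μ : S → Option C) : Prop :=
  I.IsMatching μ ∧
    ∀ s c, I.acceptable s c → I.pref s (some c) < I.pref s (μ s) →
      s ∉ Ch c (insert s (I.assigned μ c))

/-- `μ` is the student-optimal stable matching w.r.t. `Ch`: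
stable and weakly preferred by every student to every stable matching. -/
def IsOptStable (I : SchoolChoice S C) (Ch : C → Finset S → Finset S) (μ : S → Option C) :
    Prop :=
  I.IsStable Ch μ ∧ ∀ μ', I.IsStable Ch μ' → ∀ s, I.pref s (μ s) ≤ I.pref s (μ' s)

/-! Restricted (sub)instances, used by the three-stage discovery program: only students
in `A` participate and school `c` has quota `q' c`, with baseline (responsive) choice
functions. -/

def IsMatchingOn (I : SchoolChoice S C) (A : Finset S) (q' : C → ℕ) (μ : S → Option C) :
    Prop :=
  (∀ s, s ∉ A → μ s = none) ∧
    (∀ s c, μ s = some c → I.acceptable s c) ∧ ∀ c, (I.assigned μ c).card ≤ q' c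

def IsStableOn (I : SchoolChoice S C) (A : Finset S) (q' : C → ℕ) (μ : S → Option C) : Prop :=
  I.IsMatchingOn A q' μ ∧
    ∀ s ∈ A, ∀ c : C, I.acceptable s c → I.pref s (some c) < I.pref s (μ s) →
      s ∉ I.maxSet c (insert s (I.assigned μ c)) (q' c)

def IsOptStableOn (I : SchoolChoice S C) (A : Finset S) (q' : C → ℕ) (μ : S → Option C) :
    Prop :=
  I.IsStableOn A q' μ ∧
    ∀ μ', I.IsStableOn A q' μ' → ∀ s ∈ A, I.pref s (μ s) ≤ I.pref s (μ' s)

/-- `μ` is the discovery-program matching: the union of the three stage matchings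
`μ1` (general seats, all students), `μ2` (reserved seats, unmatched disadvantaged
students), `μ3` (vacant reserved seats, unmatched advantaged students). -/
def IsDisc (I : SchoolChoice S C) (μ : S → Option C) : Prop :=
  ∃ μ1 μ2 μ3 : S → Option C,
    I.IsOptStableOn Finset.univ (fun c => I.q c - I.qR c) μ1 ∧
    I.IsOptStableOn (I.dis.filter fun s => μ1 s = none) I.qR μ2 ∧
    I.IsOptStableOn ((Finset.univ \ I.dis).filter fun s => μ1 s = none)
      (fun c => I.qR c - (I.assigned μ2 c).card) μ3 ∧
    ∀ s, μ s = Option.elim (μ1 s) (Option.elim (μ2 s) (μ3 s) some) some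

/-- `(s, c)` is a blocking pair of `μ` for disadvantaged students -/
def BlockDis (I : SchoolChoice S C) (μ : S → Option C) (s : S) (c : C) : Prop :=
  s ∈ I.dis ∧ I.acceptable s c ∧ I.pref s (some c) < I.pref s (μ s) ∧
    ∃ s' ∈ I.assigned μ c, s' ∈ I.dis ∧ I.prio c s < I.prio c s'

/-- `(s, c)` is a blocking pair of `μ` for advantaged students -/
def BlockAdv (I : SchoolChoice S C) (μ : S → Option C) (s : S) (c : C) : Prop :=
  s ∉ I.dis ∧ I.acceptable s c ∧ I.pref s (some c) < I.pref s (μ s) ∧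
    ∃ s' ∈ I.assigned μ c, s' ∉ I.dis ∧ I.prio c s < I.prio c s'

/-- `(s, c)` is an in-group blocking pair of `μ` -/
def InGroupBlock (I : SchoolChoice S C) (μ : S → Option C) (s : S) (c : C) : Prop :=
  I.BlockDis μ s c ∨ I.BlockAdv μ s c

/-- all schools share a common priority order over the students -/
def CommonPriority (I : SchoolChoice S C) : Prop :=
  ∀ c c' : C, ∀ t u : S, I.prio c t < I.prio c u ↔ I.prio c' t < I.prio c' u

/-- the reservation quotas are a smart reserve w.r.t. the baseline matching `μBase` -/
def SmartReserve (I : SchoolChoice S C) (μBase : S → Option C) : Prop :=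
  ∀ c, (I.assigned μBase c ∩ I.dis).card ≤ I.qR c

end SchoolChoice
namespace SchoolChoice

variable {S C : Type*} [Fintype S] [DecidableEq S] [Fintype C] [DecidableEq C]

/-! Auxiliary instances: each school `c` is split into `Sum.inl c = c'` (general seats,
quota `q c - qR c`, priority `>_c`) and `Sum.inr c = c''` (reserved seats, quota `qR c`,
priority ranking all disadvantaged students above all advantaged students and each group
by `>_c`). The projection `ω` is `Sum.elim id id`. -/

/-- priority ranks of the auxiliary schools -/
def prioAux (I : SchoolChoice S C) : C ⊕ C → S → ℕ
  | Sum.inl c => I.prio c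
  | Sum.inr c => fun t =>
      if t ∈ I.dis then I.prio c t else Finset.univ.sup (I.prio c) + 1 + I.prio c t

theorem prioAux_inj (I : SchoolChoice S C) (d : C ⊕ C) :
    Function.Injective (I.prioAux d) := by
  cases d with
  | inl c => exact I.prio_inj c
  | inr c =>
    intro t u h
    simp only [prioAux] at h
    have ht := Finset.le_sup (f := I.prio c) (Finset.mem_univ t)
    have hu := Finset.le_sup (f := I.prio c) (Finset.mem_univ u)
    split_ifs at h
    · exact I.prio_inj c h
    · exact absurd h (by omega)
    · exact absurd h (by omega)
    · exact I.prio_inj c (by omega)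

/-- JSA auxiliary preferences: `c1' > c1'' > c2' > c2'' > ⋯` -/
def prefJSAAux (I : SchoolChoice S C) (s : S) : Option (C ⊕ C) → ℕ
  | none => 2 * I.pref s none
  | some (Sum.inl c) => 2 * I.pref s (some c)
  | some (Sum.inr c) => 2 * I.pref s (some c) + 1

theorem prefJSAAux_inj (I : SchoolChoice S C) (s : S) :
    Function.Injective (I.prefJSAAux s) := by
  intro o1 o2 h
  rcases o1 with _ | (c1 | c1) <;> rcases o2 with _ | (c2 | c2) <;>
    simp only [prefJSAAux] at h
  · rfl
  · exact (Option.some_ne_none c2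
      (I.pref_inj s (show I.pref s none = I.pref s (some c2) by omega)).symm).elim
  · exact absurd h (by omega)
  · exact (Option.some_ne_none c1
      (I.pref_inj s (show I.pref s (some c1) = I.pref s none by omega))).elim
  · rw [Option.some.inj
      (I.pref_inj s (show I.pref s (some c1) = I.pref s (some c2) by omega))]
  · exact absurd h (by omega)
  · exact absurd h (by omega)
  · exact absurd h (by omega)
  · rw [Option.some.inj
      (I.pref_inj s (show I.pref s (some c1) = I.pref s (some c2) by omega))]

/-- a bound strictly larger than all preference ranks of student `s` -/
def prefB (I : SchoolChoice S C) (s : S) : ℕ := Finset.univ.sup (I.pref s) + 1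

/-- DISC auxiliary preferences: `c1' > ⋯ > ck' > c1'' > ⋯ > ck''`
(acceptable general copies first, then acceptable reserved copies, then being
unmatched, then the copies of unacceptable schools). -/
def prefDISCAux (I : SchoolChoice S C) (s : S) : Option (C ⊕ C) → ℕ
  | none => 2 * I.prefB s
  | some (Sum.inl c) =>
      if I.pref s (some c) < I.pref s none then I.pref s (some c)
      else 2 * I.prefB s + 1 + I.pref s (some c)
  | some (Sum.inr c) =>
      if I.pref s (some c) < I.pref s none then I.prefB s + I.pref s (some c)
      else 3 * I.prefB s + 1 + I.pref s (some c)

theorem prefDISCAux_inj (I : SchoolChoice S C) (s : S) :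
    Function.Injective (I.prefDISCAux s) := by
  have hb : ∀ o : Option C, I.pref s o < I.prefB s := by
    intro o
    have := Finset.le_sup (f := I.pref s) (Finset.mem_univ o)
    simp only [prefB]
    omega
  intro o1 o2 h
  have hn := hb none
  rcases o1 with _ | (c1 | c1) <;> rcases o2 with _ | (c2 | c2) <;>
    simp only [prefDISCAux] at h <;> try split_ifs at h
  all_goals try rfl
  all_goals
    first
    | exact absurd h (by first
        | (have := hb (some c1); have := hb (some c2); omega)
        | (have := hb (some c1); omega)
        | (have := hb (some c2); omega))
    | rw [Option.some.inj (I.pref_inj s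
        (show I.pref s (some c1) = I.pref s (some c2) by
          have := hb (some c1); have := hb (some c2); omega))]

/-- the JSA auxiliary instance -/
def jsaAux (I : SchoolChoice S C) : SchoolChoice S (C ⊕ C) where
  dis := I.dis
  pref := I.prefJSAAux
  pref_inj := I.prefJSAAux_inj
  prio := I.prioAux
  prio_inj := I.prioAux_inj
  q := Sum.elim (fun c => I.q c - I.qR c) I.qR
  qR := fun _ => 0
  qR_le := fun _ => Nat.zero_le _

/-- the DISC auxiliary instance -/
def discAux (I : SchoolChoice S C) : SchoolChoice S (C ⊕ C) :=
  { I.jsaAux with pref := I.prefDISCAux, pref_inj := I.prefDISCAux_inj }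

/-- `ψ⁻¹`: transform a matching of the original instance into a matching of the
JSA auxiliary instance: `μ2(c') = max(μ1(c), >_c, q_c^G)`, `μ2(c'') = μ1(c) \ μ2(c')`. -/
def psiInv (I : SchoolChoice S C) (μ : S → Option C) (s : S) : Option (C ⊕ C) :=
  match μ s with
  | none => none
  | some c =>
      if s ∈ I.maxSet c (I.assigned μ c) (I.q c - I.qR c) then some (Sum.inl c)
      else some (Sum.inr c)

end SchoolChoice

/-!
Split each school `c` into a general copy `c'` (top `q_c^G` by `>_c`) and a reserved copy `c''`
(quota `q_c^R`, disadvantaged students first). The JSA choice of `c` is then exactly the choice of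
`c'` followed by the choice of `c''` among the students `c'` rejects. With this, projecting a
stable matching of the auxiliary instance gives a JSA-stable matching, and splitting each `μ(c)`
of a JSA-stable matching into its top `q_c^G` students and the rest gives an auxiliary-stable one.
Since `c'` and `c''` are adjacent in the auxiliary preferences, the two student-optimality
statements squeeze `μ^JSA(s)` and `ω(μ^JSA-a(s))` to the same preference rank.
-/

namespace SchoolChoice

variable {S C : Type*} [Fintype S] [DecidableEq S] [Fintype C] [DecidableEq C]
  {I : SchoolChoice S C} {c : C} {A B T X : Finset S} {k : ℕ} {s t : S}

lemma mem_maxSet : s ∈ I.maxSet c T k ↔ s ∈ T ∧ #{t ∈ T | I.prio c t < I.prio c s} < k :=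
  mem_filter

lemma maxSet_subset : I.maxSet c T k ⊆ T :=
  filter_subset _ _

@[simp]
lemma maxSet_empty : I.maxSet c ∅ k = ∅ :=
  filter_empty _

@[simp]
lemma maxSet_zero : I.maxSet c T 0 = ∅ :=
  filter_false_of_mem fun _ _ => Nat.not_lt_zero _

lemma card_filter_prio_lt_lt_card (hs : s ∈ T) :
    #{t ∈ T | I.prio c t < I.prio c s} < #T :=
  card_lt_card <| filter_ssubset.mpr ⟨s, hs, lt_irrefl _⟩

lemma card_filter_prio_lt_le_of_prio_le {x y : S} (hxy : I.prio c x ≤ I.prio c y) :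
    #{t ∈ T | I.prio c t < I.prio c x} ≤ #{t ∈ T | I.prio c t < I.prio c y} :=
  card_le_card <| monotone_filter_right T fun _ _ h => h.trans_le hxy

lemma card_filter_prio_lt_lt_of_prio_lt {x y : S} (hx : x ∈ T) (hxy : I.prio c x < I.prio c y) :
    #{t ∈ T | I.prio c t < I.prio c x} < #{t ∈ T | I.prio c t < I.prio c y} :=
  card_lt_card <| (ssubset_iff_of_subset <| monotone_filter_right T fun _ _ h => h.trans hxy).mpr
    ⟨x, mem_filter.mpr ⟨hx, hxy⟩, by simp⟩

lemma injOn_card_filter_prio_lt (I : SchoolChoice S C) (c : C) (T : Finset S) :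
    Set.InjOn (fun s => #{t ∈ T | I.prio c t < I.prio c s}) T := by
  intro x hx y hy h
  by_contra hne
  rcases lt_or_gt_of_ne fun h' => hne (I.prio_inj c h') with hlt | hlt
  · exact (card_filter_prio_lt_lt_of_prio_lt hx hlt).ne h
  · exact (card_filter_prio_lt_lt_of_prio_lt hy hlt).ne' h

lemma card_maxSet : #(I.maxSet c T k) = min k #T := by
  set r := fun s => #{t ∈ T | I.prio c t < I.prio c s}
  have hT : T.image r = range #T :=
    eq_of_subset_of_card_le (fun _ hn => by
        obtain ⟨s, hs, rfl⟩ := mem_image.mp hn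
        exact mem_range.mpr (card_filter_prio_lt_lt_card hs))
      (by rw [card_range, card_image_of_injOn (injOn_card_filter_prio_lt I c T)])
  have himage : (I.maxSet c T k).image r = range (min k #T) := by
    change {s ∈ T | r s < k}.image r = _
    rw [← filter_image (p := (· < k)), hT]
    ext n
    simp only [mem_filter, mem_range]
    omega
  rw [← card_image_of_injOn
    ((injOn_card_filter_prio_lt I c T).mono (coe_subset.mpr maxSet_subset)), himage, card_range]

lemma maxSet_of_card_le (h : #T ≤ k) : I.maxSet c T k = T :=
  filter_true_of_mem fun _ hs => (card_filter_prio_lt_lt_card hs).trans_le h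

lemma maxSet_eq_of_forall_prio_lt (hBT : B ⊆ T) (hB : #B = k)
    (hbeat : ∀ b ∈ B, ∀ t ∈ T \ B, I.prio c b < I.prio c t) : I.maxSet c T k = B := by
  refine eq_of_superset_of_card_ge (fun b hb => mem_maxSet.mpr ⟨hBT hb, ?_⟩) ?_
  · have : {t ∈ T | I.prio c t < I.prio c b} ⊆ B.erase b := fun t ht => by
      obtain ⟨htT, hlt⟩ := mem_filter.mp ht
      refine mem_erase.mpr ⟨fun h => by simp [h] at hlt, ?_⟩
      by_contra htB
      exact lt_asymm hlt (hbeat b hb t (mem_sdiff.mpr ⟨htT, htB⟩))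
    calc #{t ∈ T | I.prio c t < I.prio c b} ≤ #(B.erase b) := card_le_card this
      _ < k := hB ▸ card_erase_lt_of_mem hb
  · rw [card_maxSet, hB]
    exact min_le_left _ _

lemma notMem_maxSet_insert_iff :
    s ∉ I.maxSet c (insert s A) k ↔ k ≤ #{t ∈ A | I.prio c t < I.prio c s} := by
  rw [mem_maxSet, filter_insert, if_neg (lt_irrefl _)]
  simp

lemma card_eq_and_forall_prio_lt_of_notMem_maxSet_insert (hA : #A ≤ k)
    (h : s ∉ I.maxSet c (insert s A) k) : #A = k ∧ ∀ t ∈ A, I.prio c t < I.prio c s := by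
  rw [notMem_maxSet_insert_iff] at h
  have hfilter : {t ∈ A | I.prio c t < I.prio c s} = A :=
    eq_of_subset_of_card_le (filter_subset _ _) (hA.trans h)
  refine ⟨le_antisymm hA (h.trans (card_le_card (filter_subset _ _))), fun t ht => ?_⟩
  rw [← hfilter] at ht
  exact (mem_filter.mp ht).2

lemma le_card_filter_maxSet {x : ℕ} (hk : k ≤ #{t ∈ T | I.prio c t < x}) :
    k ≤ #{t ∈ I.maxSet c T k | I.prio c t < x} := by
  set L := {t ∈ T | I.prio c t < x}
  have hsub : I.maxSet c L k ⊆ {t ∈ I.maxSet c T k | I.prio c t < x} := fun t ht => by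
    obtain ⟨htL, hrank⟩ := mem_maxSet.mp ht
    obtain ⟨htT, htx⟩ := mem_filter.mp htL
    have : {u ∈ T | I.prio c u < I.prio c t} = {u ∈ L | I.prio c u < I.prio c t} := by
      rw [filter_filter]
      exact filter_congr fun u _ => ⟨fun h => ⟨h.trans htx, h⟩, And.right⟩
    exact mem_filter.mpr ⟨mem_maxSet.mpr ⟨htT, this ▸ hrank⟩, htx⟩
  calc k = #(I.maxSet c L k) := by rw [card_maxSet]; exact (min_eq_left hk).symm
    _ ≤ _ := card_le_card hsub

lemma notMem_maxSet_insert_maxSet (h : s ∉ I.maxSet c (insert s A) k) :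
    s ∉ I.maxSet c (insert s (I.maxSet c A k)) k := by
  rw [notMem_maxSet_insert_iff] at h ⊢
  exact le_card_filter_maxSet h

lemma maxSet_insert_of_notMem (h : s ∉ I.maxSet c (insert s A) k) :
    I.maxSet c (insert s A) k = I.maxSet c A k := by
  by_cases hsA : s ∈ A
  · rw [insert_eq_of_mem hsA]
  have hk := notMem_maxSet_insert_iff.mp h
  ext t
  simp only [mem_maxSet, mem_insert]
  by_cases hts : t = s
  · subst hts
    simp only [true_or, true_and, hsA, false_and, iff_false, not_lt]
    rwa [filter_insert, if_neg (lt_irrefl _)]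
  simp only [hts, false_or, and_congr_right_iff]
  intro htA
  rw [filter_insert]
  split_ifs with hst
  · have := card_filter_prio_lt_le_of_prio_le (T := A) hst.le
    rw [card_insert_of_notMem fun h => hsA (mem_filter.mp h).1]
    omega
  · rfl

lemma jsaAux_prio_inr_lt_iff_of_mem (hs : s ∈ I.dis) :
    I.jsaAux.prio (Sum.inr c) t < I.jsaAux.prio (Sum.inr c) s ↔
      t ∈ I.dis ∧ I.prio c t < I.prio c s := by
  have := le_sup (f := I.prio c) (mem_univ s)
  change prioAux I (Sum.inr c) t < prioAux I (Sum.inr c) s ↔ _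
  simp only [prioAux, hs, if_true]
  split_ifs with ht
  · simp only [ht, true_and]
  · simp only [ht, false_and, iff_false, not_lt]
    omega

lemma jsaAux_prio_inr_lt_iff_of_notMem (hs : s ∉ I.dis) :
    I.jsaAux.prio (Sum.inr c) t < I.jsaAux.prio (Sum.inr c) s ↔
      t ∈ I.dis ∨ I.prio c t < I.prio c s := by
  have := le_sup (f := I.prio c) (mem_univ t)
  change prioAux I (Sum.inr c) t < prioAux I (Sum.inr c) s ↔ _
  simp only [prioAux, hs, if_false]
  split_ifs with ht <;> simp only [ht, true_or, false_or, iff_true] <;> omega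

lemma jsaAux_maxSet_inr :
    I.jsaAux.maxSet (Sum.inr c) X k = I.maxSet c {t ∈ X | t ∈ I.dis} k ∪
      I.maxSet c {t ∈ X | t ∉ I.dis} (k - #{t ∈ X | t ∈ I.dis}) := by
  ext s
  simp only [mem_union, mem_maxSet, mem_filter]
  by_cases hs : s ∈ I.dis
  · simp only [jsaAux_prio_inr_lt_iff_of_mem hs, filter_filter, hs, not_true_eq_false, and_false,
      false_and, or_false, and_true]
  · have hsplit : {t ∈ X | t ∈ I.dis ∨ I.prio c t < I.prio c s} =
        {t ∈ X | t ∈ I.dis} ∪ {t ∈ {t ∈ X | t ∉ I.dis} | I.prio c t < I.prio c s} := by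
      ext t
      simp only [mem_filter, mem_union]
      tauto
    have hdisj : Disjoint {t ∈ X | t ∈ I.dis}
        {t ∈ {t ∈ X | t ∉ I.dis} | I.prio c t < I.prio c s} :=
      (disjoint_filter_filter_not X X (· ∈ I.dis)).mono_right (filter_subset _ _)
    simp only [jsaAux_prio_inr_lt_iff_of_notMem hs, hsplit, card_union_of_disjoint hdisj, hs,
      false_and, and_false, false_or, not_false_eq_true, and_true]
    exact and_congr_right fun _ => by omega

lemma CJSA_eq_union_CBASE_inr (T : Finset S) :
    I.CJSA c T = I.jsaGen c T ∪ I.jsaAux.CBASE (Sum.inr c) (T \ I.jsaGen c T) := by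
  by_cases hT : #T ≤ I.q c - I.qR c
  · have hG : I.jsaGen c T = T := maxSet_of_card_le hT
    have hD : (T ∩ I.dis) \ T = ∅ := sdiff_eq_empty_iff_subset.mpr inter_subset_left
    simp [CJSA, jsaRes, CBASE, hG, hD]
  set D := {t ∈ T \ I.jsaGen c T | t ∈ I.dis} with hDdef
  have hG : #(I.jsaGen c T) = I.q c - I.qR c := by
    rw [jsaGen, card_maxSet]; exact min_eq_left (by omega)
  have hres : I.jsaRes c T = I.maxSet c D (I.qR c) := by
    rw [jsaRes]; congr 1; ext t; simp [D]; tauto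
  have hGR : Disjoint (I.jsaGen c T) (I.maxSet c D (I.qR c)) :=
    disjoint_left.mpr fun t htG htR => (mem_sdiff.mp (mem_filter.mp (maxSet_subset htR)).1).2 htG
  have hq := I.qR_le c
  have hsdiff : T \ (I.jsaGen c T ∪ I.maxSet c D (I.qR c)) =
      (T \ I.jsaGen c T) \ I.maxSet c D (I.qR c) := sdiff_sdiff_left.symm
  rw [CJSA, hres, union_assoc, card_union_of_disjoint hGR, hG, hsdiff]
  change _ = _ ∪ I.jsaAux.maxSet (Sum.inr c) _ (I.qR c)
  rw [jsaAux_maxSet_inr, ← hDdef]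
  congr 1
  rcases le_or_gt #D (I.qR c) with hD | hD
  · have hR : I.maxSet c D (I.qR c) = D := maxSet_of_card_le hD
    have : (T \ I.jsaGen c T) \ D = {t ∈ T \ I.jsaGen c T | t ∉ I.dis} := by
      ext t; simp only [mem_sdiff, mem_filter, D]; tauto
    rw [hR, this]
    congr 2
    omega
  · have hR : #(I.maxSet c D (I.qR c)) = I.qR c := by
      rw [card_maxSet]; exact min_eq_left hD.le
    rw [hR, show I.q c - (I.q c - I.qR c + I.qR c) = 0 by omega, show I.qR c - #D = 0 by omega]
    simp

lemma two_mul_pref_map_le_jsaAux_pref (s : S) (o : Option (C ⊕ C)) :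
    2 * I.pref s (o.map (Sum.elim id id)) ≤ I.jsaAux.pref s o := by
  rcases o with _ | c | c <;> simp [jsaAux, prefJSAAux]

lemma jsaAux_pref_le_two_mul_pref_map_add_one (s : S) (o : Option (C ⊕ C)) :
    I.jsaAux.pref s o ≤ 2 * I.pref s (o.map (Sum.elim id id)) + 1 := by
  rcases o with _ | c | c <;> simp [jsaAux, prefJSAAux]

lemma jsaAux_pref_inl_lt_inr :
    I.jsaAux.pref s (some (Sum.inl c)) < I.jsaAux.pref s (some (Sum.inr c)) :=
  Nat.lt_succ_self _

lemma jsaAux_acceptable_iff {d : C ⊕ C} :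
    I.jsaAux.acceptable s d ↔ I.acceptable s (Sum.elim id id d) := by
  have := I.two_mul_pref_map_le_jsaAux_pref s (some d)
  have := I.jsaAux_pref_le_two_mul_pref_map_add_one s (some d)
  change I.jsaAux.pref s (some d) < 2 * I.pref s none ↔ _
  simp only [Option.map_some] at *
  unfold acceptable
  omega

lemma jsaAux_pref_lt_of_pref_lt {d : C ⊕ C} {o : Option (C ⊕ C)}
    (h : I.pref s (some (Sum.elim id id d)) < I.pref s (o.map (Sum.elim id id))) :
    I.jsaAux.pref s (some d) < I.jsaAux.pref s o := by
  have := I.jsaAux_pref_le_two_mul_pref_map_add_one s (some d)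
  have := I.two_mul_pref_map_le_jsaAux_pref s o
  simp only [Option.map_some] at *
  omega

lemma pref_lt_of_jsaAux_pref_inr_lt {o : Option (C ⊕ C)}
    (h : I.jsaAux.pref s (some (Sum.inr c)) < I.jsaAux.pref s o) :
    I.pref s (some c) < I.pref s (o.map (Sum.elim id id)) := by
  have := I.jsaAux_pref_le_two_mul_pref_map_add_one s o
  change 2 * I.pref s (some c) + 1 < _ at h
  omega

lemma pref_lt_or_eq_inr_of_jsaAux_pref_inl_lt {o : Option (C ⊕ C)}
    (h : I.jsaAux.pref s (some (Sum.inl c)) < I.jsaAux.pref s o) :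
    I.pref s (some c) < I.pref s (o.map (Sum.elim id id)) ∨ o = some (Sum.inr c) := by
  have := I.jsaAux_pref_le_two_mul_pref_map_add_one s o
  change 2 * I.pref s (some c) < _ at h
  refine (Nat.lt_or_ge _ _).imp_right fun hge => ?_
  have hmap : o.map (Sum.elim id id) = some c := I.pref_inj s (by omega)
  rcases o with _ | d | d
  · simp at hmap
  · simp only [Option.map_some, Sum.elim_inl, id, Option.some.injEq] at hmap
    subst hmap
    exact absurd h (lt_irrefl _)
  · simp_all

lemma mem_assigned {μ : S → Option C} : s ∈ I.assigned μ c ↔ μ s = some c := by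
  simp [assigned]

lemma assigned_map_elim (μA : S → Option (C ⊕ C)) (c : C) :
    I.assigned (fun s => (μA s).map (Sum.elim id id)) c =
      I.jsaAux.assigned μA (Sum.inl c) ∪ I.jsaAux.assigned μA (Sum.inr c) := by
  ext s
  simp only [mem_union, mem_assigned]
  rcases μA s with _ | d | d <;> simp

lemma disjoint_jsaAux_assigned_inl_inr (μA : S → Option (C ⊕ C)) (c : C) :
    Disjoint (I.jsaAux.assigned μA (Sum.inl c)) (I.jsaAux.assigned μA (Sum.inr c)) :=
  disjoint_left.mpr fun s hl hr => by
    rw [mem_assigned] at hl hr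
    simp [hl] at hr

lemma map_psiInv (μ : S → Option C) (s : S) : (I.psiInv μ s).map (Sum.elim id id) = μ s := by
  unfold psiInv
  rcases μ s with _ | c
  · rfl
  · dsimp only
    split_ifs <;> rfl

lemma assigned_psiInv_inl (μ : S → Option C) (c : C) :
    I.jsaAux.assigned (I.psiInv μ) (Sum.inl c) = I.jsaGen c (I.assigned μ c) := by
  ext s
  rw [mem_assigned]
  unfold psiInv
  constructor
  · intro h
    rcases hs : μ s with _ | c₀ <;> simp only [hs] at h
    · simp at h
    · split_ifs at h with hg
      · obtain rfl : c₀ = c := by simpa using h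
        exact hg
      · simp at h
  · intro h
    rw [mem_assigned.mp (maxSet_subset h)]
    exact if_pos h

lemma assigned_psiInv_inr (μ : S → Option C) (c : C) :
    I.jsaAux.assigned (I.psiInv μ) (Sum.inr c) =
      I.assigned μ c \ I.jsaGen c (I.assigned μ c) := by
  ext s
  rw [mem_assigned, mem_sdiff, mem_assigned]
  unfold psiInv
  constructor
  · intro h
    rcases hs : μ s with _ | c₀ <;> simp only [hs] at h
    · simp at h
    · split_ifs at h with hg
      · simp at h
      · obtain rfl : c₀ = c := by simpa using h
        exact ⟨rfl, hg⟩
  · rintro ⟨hs, hg⟩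
    rw [hs]
    exact if_neg hg

lemma IsStable.card_assigned_eq_and_forall_prio_lt {μ : S → Option C}
    (h : I.IsStable I.CBASE μ) (hacc : I.acceptable s c)
    (hpref : I.pref s (some c) < I.pref s (μ s)) :
    #(I.assigned μ c) = I.q c ∧ ∀ t ∈ I.assigned μ c, I.prio c t < I.prio c s :=
  card_eq_and_forall_prio_lt_of_notMem_maxSet_insert (h.1.2 c) (h.2 s c hacc hpref)

lemma isMatching_map_of_isMatching_jsaAux {μA : S → Option (C ⊕ C)}
    (h : I.jsaAux.IsMatching μA) : I.IsMatching fun s => (μA s).map (Sum.elim id id) := by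
  refine ⟨fun s c hc => ?_, fun c => ?_⟩
  · obtain ⟨d, hd, rfl⟩ := Option.map_eq_some_iff.mp hc
    exact jsaAux_acceptable_iff.mp (h.1 s d hd)
  · rw [assigned_map_elim]
    calc _ ≤ #(I.jsaAux.assigned μA (Sum.inl c)) + #(I.jsaAux.assigned μA (Sum.inr c)) :=
          card_union_le _ _
      _ ≤ (I.q c - I.qR c) + I.qR c := add_le_add (h.2 (Sum.inl c)) (h.2 (Sum.inr c))
      _ = I.q c := Nat.sub_add_cancel (I.qR_le c)

theorem isStable_CJSA_map_of_isStable_jsaAux {μA : S → Option (C ⊕ C)}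
    (h : I.jsaAux.IsStable I.jsaAux.CBASE μA) :
    I.IsStable I.CJSA fun s => (μA s).map (Sum.elim id id) := by
  refine ⟨isMatching_map_of_isMatching_jsaAux h.1, fun s c hc hpref hmem => ?_⟩
  set G := I.jsaAux.assigned μA (Sum.inl c)
  set R := I.jsaAux.assigned μA (Sum.inr c)
  rw [assigned_map_elim] at hmem
  have hprefG : I.jsaAux.pref s (some (Sum.inl c)) < I.jsaAux.pref s (μA s) :=
    jsaAux_pref_lt_of_pref_lt hpref
  have hprefR : I.jsaAux.pref s (some (Sum.inr c)) < I.jsaAux.pref s (μA s) :=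
    jsaAux_pref_lt_of_pref_lt hpref
  have hsG : s ∉ G := fun hs => hprefG.ne (by rw [mem_assigned.mp hs])
  obtain ⟨hGcard, hGs⟩ := IsStable.card_assigned_eq_and_forall_prio_lt
    h (jsaAux_acceptable_iff.mpr hc) hprefG
  -- a student on a reserved seat of `c` prefers `c'`, so stability at `c'` ranks `G` above it
  have hGR : ∀ r ∈ R, ∀ g ∈ G, I.prio c g < I.prio c r := fun r hr => by
    have hr' := mem_assigned.mp hr
    refine (IsStable.card_assigned_eq_and_forall_prio_lt h
      (jsaAux_acceptable_iff.mpr ?_) (hr' ▸ jsaAux_pref_inl_lt_inr)).2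
    exact (jsaAux_acceptable_iff (d := Sum.inr c)).mp (h.1.1 r _ hr')
  have hgen : I.jsaGen c (insert s (G ∪ R)) = G := by
    refine maxSet_eq_of_forall_prio_lt (subset_union_left.trans (subset_insert _ _)) hGcard ?_
    intro g hg t ht
    rw [insert_sdiff_of_notMem _ hsG, union_sdiff_left, mem_insert] at ht
    rcases ht with rfl | ht
    · exact hGs g hg
    · exact hGR t (mem_sdiff.mp ht).1 g hg
  rw [CJSA_eq_union_CBASE_inr, hgen, insert_sdiff_of_notMem _ hsG,
    union_sdiff_cancel_left (disjoint_jsaAux_assigned_inl_inr μA c)] at hmem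
  exact (mem_union.mp hmem).elim hsG (h.2 s _ (jsaAux_acceptable_iff.mpr hc) hprefR)

lemma isMatching_jsaAux_psiInv {μ : S → Option C} (h : I.IsMatching μ) :
    I.jsaAux.IsMatching (I.psiInv μ) := by
  refine ⟨fun s d hd => ?_, fun d => ?_⟩
  · have hμ := map_psiInv (I := I) μ s
    rw [hd, Option.map_some] at hμ
    exact jsaAux_acceptable_iff.mpr (h.1 s _ hμ.symm)
  · rcases d with c | c
    · rw [assigned_psiInv_inl, jsaGen, card_maxSet]
      exact min_le_left _ _
    · rw [assigned_psiInv_inr, jsaGen, card_sdiff_of_subset maxSet_subset, card_maxSet]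
      have := h.2 c
      have := I.qR_le c
      change _ ≤ I.qR c
      omega

theorem isStable_jsaAux_psiInv {μ : S → Option C} (h : I.IsStable I.CJSA μ) :
    I.jsaAux.IsStable I.jsaAux.CBASE (I.psiInv μ) := by
  refine ⟨isMatching_jsaAux_psiInv h.1, fun s d hd hpref => ?_⟩
  rcases d with c | c
  · suffices s ∉ I.jsaGen c (insert s (I.assigned μ c)) by
      change s ∉ I.jsaGen c (insert s _)
      rw [assigned_psiInv_inl]
      exact notMem_maxSet_insert_maxSet this
    rcases pref_lt_or_eq_inr_of_jsaAux_pref_inl_lt hpref with hlt | hinr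
    · rw [map_psiInv] at hlt
      exact fun hg => h.2 s c (jsaAux_acceptable_iff.mp hd) hlt
        (mem_union_left _ (mem_union_left _ hg))
    · have hs : s ∈ I.assigned μ c \ I.jsaGen c (I.assigned μ c) := by
        rw [← assigned_psiInv_inr, mem_assigned, hinr]
      rw [insert_eq_of_mem (mem_sdiff.mp hs).1]
      exact (mem_sdiff.mp hs).2
  · have hlt := pref_lt_of_jsaAux_pref_inr_lt hpref
    rw [map_psiInv] at hlt
    have hsA : s ∉ I.assigned μ c := fun hs => (mem_assigned.mp hs ▸ hlt).false
    have hrej := h.2 s c (jsaAux_acceptable_iff.mp hd) hlt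
    rw [CJSA_eq_union_CBASE_inr, notMem_union] at hrej
    obtain ⟨hgen, hres⟩ := hrej
    rwa [jsaGen, maxSet_insert_of_notMem hgen,
      insert_sdiff_of_notMem _ fun hs => hsA (maxSet_subset hs), ← jsaGen,
      ← assigned_psiInv_inr] at hres

end SchoolChoice

/-- the joint-seat-allocation assignment equals the projection of the
student-optimal stable matching of the JSA auxiliary instance. -/
theorem JSA_aux_equivalence {S C : Type*} [Fintype S] [DecidableEq S] [Fintype C] [DecidableEq C]
    (I : SchoolChoice S C) (μJ : S → Option C) (μA : S → Option (C ⊕ C))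
    (hJ : I.IsOptStable I.CJSA μJ)
    (hA : I.jsaAux.IsOptStable I.jsaAux.CBASE μA) :
    ∀ s : S, μJ s = (μA s).map (Sum.elim id id) := by
  intro s
  have hJA := hJ.2 _ (SchoolChoice.isStable_CJSA_map_of_isStable_jsaAux hA.1) s
  have hAJ := hA.2 _ (SchoolChoice.isStable_jsaAux_psiInv hJ.1) s
  have hA2 := I.two_mul_pref_map_le_jsaAux_pref s (μA s)
  have hJ2 := I.jsaAux_pref_le_two_mul_pref_map_add_one s (I.psiInv μJ s)
  rw [SchoolChoice.map_psiInv] at hJ2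
  exact I.pref_inj s (by omega)
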